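/- arXiv:1708.02339 — 7 statements merged into one kernel-verified Lean document; each statement's English description precedes it below -/
import Mathlib

section
/- Let L : ℝ → ℝ be convex and differentiable, let g : ℝ → ℝ be differentiable, fix t > 0 and real numbers α < β, and for x ∈ ℝ define u(x) := min_{y ∈ [α,β]} ( t·L((x−y)/t) + g(y) ) (the minimum is attained by continuity). Fix x₀ ∈ ℝ, let M ⊆ [α,β] be the set of minimizers of y ↦ t·L((x₀−y)/t) + g(y) over [α,β], and let y* := sup M. Then: (i) y* ∈ M, i.e. the supremum of the set of minimizers is itself a minimizer; (ii) if y* lies in the open interval (α,β), then L'((x₀ − y*)/t) = g'(y*); and (iii) if moreover u is differentiable at x₀ and y* ∈ (α,β), then u'(x₀) = g'(y*). -/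
/-! The minimizers of the continuous map `y ↦ f x₀ y` on `[α, β]` form a compact set, so their
supremum `y*` is again a minimizer. At an interior minimizer the `y`-derivative of `f x₀`
vanishes, which is the first-order condition `L'((x₀ - y*)/t) = g'(y*)`. Finally
`x ↦ f x y*` lies above `u` and touches it at `x₀`, so where `u` is differentiable its
derivative at `x₀` is the `x`-derivative of `f x y*`, namely `L'((x₀ - y*)/t) = g'(y*)`. -/

open Set Filter Topology

lemma IsCompact.sSup_mem_minimizers {s : Set ℝ} {f : ℝ → ℝ} (hs : IsCompact s)
    (hne : s.Nonempty) (hf : ContinuousOn f s) :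
    sSup {y | y ∈ s ∧ ∀ z ∈ s, f y ≤ f z} ∈ {y | y ∈ s ∧ ∀ z ∈ s, f y ≤ f z} := by
  obtain ⟨y₀, hy₀, hmin⟩ := hs.exists_isMinOn hne hf
  have hM : {y | y ∈ s ∧ ∀ z ∈ s, f y ≤ f z} = s ∩ f ⁻¹' Iic (f y₀) := by
    ext y
    exact ⟨fun ⟨hy, h⟩ => ⟨hy, h y₀ hy₀⟩, fun ⟨hy, h⟩ => ⟨hy, fun z hz => h.trans (hmin hz)⟩⟩
  rw [hM]
  have hclosed := hf.preimage_isClosed_of_isClosed hs.isClosed (isClosed_Iic (a := f y₀))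
  exact (hs.of_isClosed_subset hclosed inter_subset_left).sSup_mem ⟨y₀, hy₀, le_refl (f y₀)⟩

lemma HasDerivAt.eq_of_eventuallyLE_of_eq {f g : ℝ → ℝ} {f' g' x : ℝ}
    (hf : HasDerivAt f f' x) (hg : HasDerivAt g g' x) (hle : f ≤ᶠ[𝓝 x] g) (heq : f x = g x) :
    f' = g' := by
  have hmin : IsLocalMin (fun y => g y - f y) x :=
    hle.mono fun y hy => by simp only [heq, sub_self, sub_nonneg]; exact hy
  linarith [hmin.hasDerivAt_eq_zero (hg.sub hf)]

section ScaledComposition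

variable {L : ℝ → ℝ} {L' t x y : ℝ}

lemma hasDerivAt_scaled_comp_sub_const (ht : t ≠ 0) (hL : HasDerivAt L L' ((x - y) / t)) :
    HasDerivAt (fun x => t * L ((x - y) / t)) L' x := by
  have h := (hL.comp x (((hasDerivAt_id x).sub_const y).div_const t)).const_mul t
  rwa [mul_one_div, mul_div_cancel₀ _ ht] at h

lemma hasDerivAt_scaled_comp_const_sub (ht : t ≠ 0) (hL : HasDerivAt L L' ((x - y) / t)) :
    HasDerivAt (fun y => t * L ((x - y) / t)) (-L') y := by
  have h := (hL.comp y (((hasDerivAt_id y).const_sub x).div_const t)).const_mul t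
  rwa [neg_div, mul_neg, mul_neg, mul_one_div, mul_div_cancel₀ _ ht] at h

end ScaledComposition

theorem stmt1_general (L g : ℝ → ℝ)
    (hLdiff : Differentiable ℝ L) (hgdiff : Differentiable ℝ g)
    (t : ℝ) (ht : 0 < t) (α β : ℝ) (hαβ : α < β) (x₀ : ℝ) :
    let f : ℝ → ℝ → ℝ := fun x y => t * L ((x - y) / t) + g y
    let u : ℝ → ℝ := fun x => sInf (f x '' Set.Icc α β)
    let M : Set ℝ := {y | y ∈ Set.Icc α β ∧ ∀ z ∈ Set.Icc α β, f x₀ y ≤ f x₀ z}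
    let ystar : ℝ := sSup M
    ystar ∈ M ∧
    (ystar ∈ Set.Ioo α β → deriv L ((x₀ - ystar) / t) = deriv g ystar) ∧
    (ystar ∈ Set.Ioo α β → DifferentiableAt ℝ u x₀ → deriv u x₀ = deriv g ystar) := by
  intro f u M ystar
  have hfc (x : ℝ) : Continuous (f x) := by
    have := hLdiff.continuous; have := hgdiff.continuous; fun_prop
  have hystar : ystar ∈ M :=
    isCompact_Icc.sSup_mem_minimizers (nonempty_Icc.2 hαβ.le) (hfc x₀).continuousOn
  have hfirstOrder (hIoo : ystar ∈ Ioo α β) : deriv L ((x₀ - ystar) / t) = deriv g ystar := by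
    have hmin : IsLocalMin (f x₀) ystar := IsMinOn.isLocalMin hystar.2 (Icc_mem_nhds hIoo.1 hIoo.2)
    linarith [hmin.hasDerivAt_eq_zero ((hasDerivAt_scaled_comp_const_sub ht.ne'
      (hLdiff _).hasDerivAt).add (hgdiff ystar).hasDerivAt)]
  refine ⟨hystar, hfirstOrder, fun hIoo hu => ?_⟩
  have hu_le (x : ℝ) : u x ≤ f x ystar :=
    csInf_le (isCompact_Icc.image (hfc x)).bddBelow (mem_image_of_mem _ hystar.1)
  have hu_eq : u x₀ = f x₀ ystar :=
    IsLeast.csInf_eq ⟨mem_image_of_mem _ hystar.1, forall_mem_image.2 hystar.2⟩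
  rw [← hfirstOrder hIoo]
  exact hu.hasDerivAt.eq_of_eventuallyLE_of_eq
    ((hasDerivAt_scaled_comp_sub_const ht.ne' (hLdiff _).hasDerivAt).add_const _)
    (Eventually.of_forall hu_le) hu_eq

/-- Theorem 2.5: the identity `w(x,t) = g'(y*(x,t))` for the x-derivative of the
Hopf–Lax value function when the minimizer is not unique, with `y*` the greatest
minimizer (supremum of the set of minimizers over `[α,β]`). -/
theorem stmt1 (L g : ℝ → ℝ) (hLconv : ConvexOn ℝ Set.univ L)
    (hLdiff : Differentiable ℝ L) (hgdiff : Differentiable ℝ g)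
    (t : ℝ) (ht : 0 < t) (α β : ℝ) (hαβ : α < β) (x₀ : ℝ) :
    let f : ℝ → ℝ → ℝ := fun x y => t * L ((x - y) / t) + g y
    let u : ℝ → ℝ := fun x => sInf (f x '' Set.Icc α β)
    let M : Set ℝ := {y | y ∈ Set.Icc α β ∧ ∀ z ∈ Set.Icc α β, f x₀ y ≤ f x₀ z}
    let ystar : ℝ := sSup M
    ystar ∈ M ∧
    (ystar ∈ Set.Ioo α β → deriv L ((x₀ - ystar) / t) = deriv g ystar) ∧
    (ystar ∈ Set.Ioo α β → DifferentiableAt ℝ u x₀ → deriv u x₀ = deriv g ystar) :=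
  stmt1_general L g hLdiff hgdiff t ht α β hαβ x₀
end

section
/- Fix real numbers a < 0 < b, let L : ℝ → ℝ be convex and continuous on the closed interval [a,b], and let g : ℝ → ℝ be Lipschitz. For x ∈ ℝ and t > 0 define u(x,t) := min_{y ∈ [x − b·t, x − a·t]} ( t·L((x−y)/t) + g(y) ). Then for every x ∈ ℝ and every 0 < s < t one has the dynamic programming identity u(x,t) = min_{y ∈ [x − b·(t−s), x − a·(t−s)]} ( (t−s)·L((x−y)/(t−s)) + u(y,s) ). -/
/-!
Write `u = hopfLax L a b t g`. If `y` is an admissible intermediate point between `z` and `x`,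
convexity of `L` gives the subadditivity of the perspective
`(s + t) L((x - z)/(s + t)) ≤ t L((x - y)/t) + s L((y - z)/s)`, so the infimum over two stages
is never below the one-stage infimum. Conversely, for an admissible `z` the point `y` dividing
`[z, x]` in the ratio `s : t` makes both difference quotients equal to `(x - z)/(s + t)`, and
there the two-stage cost equals the one-stage cost.
-/

open Set

noncomputable def hopfLax (L : ℝ → ℝ) (a b t : ℝ) (g : ℝ → ℝ) (x : ℝ) : ℝ :=
  sInf ((fun y => t * L ((x - y) / t) + g y) '' Icc (x - b * t) (x - a * t))

theorem ConvexOn.add_mul_apply_div_add_le {D : Set ℝ} {f : ℝ → ℝ} (hf : ConvexOn ℝ D f)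
    {s t p q : ℝ} (hs : 0 < s) (ht : 0 < t) (hp : p / s ∈ D) (hq : q / t ∈ D) :
    (s + t) * f ((p + q) / (s + t)) ≤ s * f (p / s) + t * f (q / t) := by
  have hst : 0 < s + t := add_pos hs ht
  have h := hf.2 hp hq (div_pos hs hst).le (div_pos ht hst).le (by field_simp)
  have hcomb : (s / (s + t)) • (p / s) + (t / (s + t)) • (q / t) = (p + q) / (s + t) := by
    simp only [smul_eq_mul]
    field_simp
  rw [hcomb, smul_eq_mul, smul_eq_mul] at h
  calc (s + t) * f ((p + q) / (s + t))
      ≤ (s + t) * (s / (s + t) * f (p / s) + t / (s + t) * f (q / t)) :=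
        mul_le_mul_of_nonneg_left h hst.le
    _ = s * f (p / s) + t * f (q / t) := by field_simp

theorem mem_Icc_sub_mul_iff {a b t x y : ℝ} (ht : 0 < t) :
    y ∈ Icc (x - b * t) (x - a * t) ↔ (x - y) / t ∈ Icc a b := by
  simp only [mem_Icc, le_div_iff₀ ht, div_le_iff₀ ht]
  constructor <;> rintro ⟨h₁, h₂⟩ <;> constructor <;> linarith

namespace hopfLax

variable {L g : ℝ → ℝ} {a b : ℝ}

theorem bddBelow_image (hL : ContinuousOn L (Icc a b)) (hg : Continuous g) {t : ℝ} (ht : 0 < t)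
    (x : ℝ) : BddBelow ((fun y => t * L ((x - y) / t) + g y) '' Icc (x - b * t) (x - a * t)) := by
  refine isCompact_Icc.bddBelow_image (ContinuousOn.add ?_ hg.continuousOn)
  refine continuousOn_const.mul (hL.comp (by fun_prop) fun y hy => ?_)
  exact (mem_Icc_sub_mul_iff ht).1 hy

theorem le_apply_add (hL : ContinuousOn L (Icc a b)) (hg : Continuous g) {t x y : ℝ}
    (ht : 0 < t) (hy : y ∈ Icc (x - b * t) (x - a * t)) :
    hopfLax L a b t g x ≤ t * L ((x - y) / t) + g y :=
  csInf_le (bddBelow_image hL hg ht x) ⟨y, hy, rfl⟩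

theorem le_of_forall_le (hab : a ≤ b) {t x c : ℝ} (ht : 0 ≤ t)
    (h : ∀ y ∈ Icc (x - b * t) (x - a * t), c ≤ t * L ((x - y) / t) + g y) :
    c ≤ hopfLax L a b t g x := by
  have hne : (Icc (x - b * t) (x - a * t)).Nonempty :=
    nonempty_Icc.2 (by nlinarith)
  exact le_csInf (hne.image _) (by rintro _ ⟨y, hy, rfl⟩; exact h y hy)

theorem add_le_apply_add (hab : a ≤ b) (hLconv : ConvexOn ℝ (Icc a b) L)
    (hLcont : ContinuousOn L (Icc a b)) (hg : Continuous g) {s t x y : ℝ} (hs : 0 < s)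
    (ht : 0 < t) (hy : y ∈ Icc (x - b * t) (x - a * t)) :
    hopfLax L a b (s + t) g x ≤ t * L ((x - y) / t) + hopfLax L a b s g y := by
  rw [← sub_le_iff_le_add']
  refine le_of_forall_le hab hs.le fun z hz => ?_
  have hz' : z ∈ Icc (x - b * (s + t)) (x - a * (s + t)) := by
    constructor <;> linarith [hy.1, hy.2, hz.1, hz.2]
  have hconv := hLconv.add_mul_apply_div_add_le hs ht
    ((mem_Icc_sub_mul_iff hs).1 hz) ((mem_Icc_sub_mul_iff ht).1 hy)
  rw [show y - z + (x - y) = x - z by ring] at hconv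
  linarith [le_apply_add hLcont hg (add_pos hs ht) hz']

theorem exists_apply_add_le (hLcont : ContinuousOn L (Icc a b)) (hg : Continuous g)
    {s t x z : ℝ} (hs : 0 < s) (ht : 0 < t) (hz : z ∈ Icc (x - b * (s + t)) (x - a * (s + t))) :
    ∃ y ∈ Icc (x - b * t) (x - a * t),
      t * L ((x - y) / t) + hopfLax L a b s g y ≤ (s + t) * L ((x - z) / (s + t)) + g z := by
  have hst : 0 < s + t := add_pos hs ht
  set y := (t * z + s * x) / (s + t)
  have hxy : (x - y) / t = (x - z) / (s + t) := by
    simp only [y]; field_simp; ring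
  have hyz : (y - z) / s = (x - z) / (s + t) := by
    simp only [y]; field_simp; ring
  have hq := (mem_Icc_sub_mul_iff hst).1 hz
  refine ⟨y, (mem_Icc_sub_mul_iff ht).2 (hxy ▸ hq), ?_⟩
  have hinner := le_apply_add hLcont hg hs ((mem_Icc_sub_mul_iff hs).2 (hyz ▸ hq))
  rw [hxy]
  rw [hyz] at hinner
  linarith

theorem add_apply (hab : a ≤ b) (hLconv : ConvexOn ℝ (Icc a b) L)
    (hLcont : ContinuousOn L (Icc a b)) (hg : Continuous g) {s t : ℝ} (hs : 0 < s) (ht : 0 < t)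
    (x : ℝ) :
    hopfLax L a b (s + t) g x = hopfLax L a b t (hopfLax L a b s g) x := by
  apply le_antisymm
  · exact le_of_forall_le hab ht.le fun y hy =>
      add_le_apply_add hab hLconv hLcont hg hs ht hy
  · have hbdd : BddBelow ((fun y => t * L ((x - y) / t) + hopfLax L a b s g y) ''
        Icc (x - b * t) (x - a * t)) := by
      refine ⟨hopfLax L a b (s + t) g x, ?_⟩
      rintro _ ⟨y, hy, rfl⟩
      exact add_le_apply_add hab hLconv hLcont hg hs ht hy
    refine le_of_forall_le hab (add_pos hs ht).le fun z hz => ?_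
    obtain ⟨y, hy, hle⟩ := exists_apply_add_le hLcont hg hs ht hz
    exact (csInf_le hbdd ⟨y, hy, rfl⟩).trans hle

end hopfLax

/-- Lemma 3.3 (Lemma 1): the dynamic programming (semigroup) identity for the
Hopf–Lax formula with Legendre transform `L` finite exactly on `[a,b]`. -/
theorem stmt4 (a b : ℝ) (ha : a < 0) (hb : 0 < b) (L : ℝ → ℝ)
    (hLconv : ConvexOn ℝ (Set.Icc a b) L) (hLcont : ContinuousOn L (Set.Icc a b))
    (g : ℝ → ℝ) (hg : ∃ K : NNReal, LipschitzWith K g) :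
    let u : ℝ → ℝ → ℝ := fun x t =>
      sInf ((fun y => t * L ((x - y) / t) + g y) '' Set.Icc (x - b * t) (x - a * t))
    ∀ x : ℝ, ∀ s t : ℝ, 0 < s → s < t →
      u x t = sInf ((fun y => (t - s) * L ((x - y) / (t - s)) + u y s) ''
        Set.Icc (x - b * (t - s)) (x - a * (t - s))) := by
  intro u x s t hs hst
  obtain ⟨K, hK⟩ := hg
  have h := hopfLax.add_apply (ha.trans hb).le hLconv hLcont hK.continuous hs (sub_pos.2 hst) x
  rwa [add_sub_cancel] at h
end

section
/- Fix real numbers a < 0 < b, let L : ℝ → ℝ be convex and continuous on the closed interval [a,b], let K ≥ 0, and let g : ℝ → ℝ be Lipschitz with constant K. For x ∈ ℝ and t > 0 define u(x,t) := min_{y ∈ [x − b·t, x − a·t]} ( t·L((x−y)/t) + g(y) ), and set C := max( |L(0)|, max_{z ∈ [a,b]} ( K·|z| − L(z) ) ). Then for every x ∈ ℝ and all 0 < s < t one has |u(x,t) − u(x,s)| ≤ C·(t − s). -/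
/-! Substituting `y = x - τ z` turns `u(x, τ)` into the infimum of `τ L(z) + g(x - τ z)` over
`z ∈ [a, b]`. Comparing the two times pointwise in `z` then gives both bounds. Going from `s` to
`t`, use `s z / t` at time `t`: by convexity between `z` and `0`, `t L(s z / t) ≤ s L(z) + (t - s) L(0)`.
Going from `t` to `s`, keep `z`: the `L` term changes by `-(t - s) L(z)` and the Lipschitz
bound on `g` costs at most `K (t - s) |z|`. -/

open Set

theorem csInf_image_le_csInf_image_add {α β : Type*} {f : α → ℝ} {g : β → ℝ} {A : Set α}
    {B : Set β} (hA : A.Nonempty) (hB : BddBelow (g '' B)) (c : ℝ)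
    (h : ∀ x ∈ A, ∃ y ∈ B, g y ≤ f x + c) : sInf (g '' B) ≤ sInf (f '' A) + c := by
  rw [← sub_le_iff_le_add]
  refine le_csInf (hA.image f) ?_
  rintro _ ⟨x, hx, rfl⟩
  obtain ⟨y, hy, hle⟩ := h x hx
  rw [sub_le_iff_le_add]
  exact (csInf_le hB ⟨y, hy, rfl⟩).trans hle

theorem ConvexOn.map_mul_le_of_zero_mem {S : Set ℝ} {f : ℝ → ℝ} (hf : ConvexOn ℝ S f)
    (h0 : 0 ∈ S) {z θ : ℝ} (hz : z ∈ S) (hθ₀ : 0 ≤ θ) (hθ₁ : θ ≤ 1) :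
    f (θ * z) ≤ θ * f z + (1 - θ) * f 0 := by
  simpa using hf.2 hz h0 hθ₀ (sub_nonneg.2 hθ₁) (by ring)

theorem Icc_sub_mul_eq_image {a b x τ : ℝ} (hτ : 0 < τ) :
    Icc (x - b * τ) (x - a * τ) = (fun z => x - τ * z) '' Icc a b := by
  ext y
  constructor
  · rintro ⟨hyb, hya⟩
    refine ⟨(x - y) / τ, ⟨?_, ?_⟩, ?_⟩
    · rw [le_div_iff₀ hτ]; linarith
    · rw [div_le_iff₀ hτ]; linarith
    · field_simp; ring
  · rintro ⟨z, ⟨hza, hzb⟩, rfl⟩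
    constructor <;> nlinarith

section HopfLax

variable {L g : ℝ → ℝ} {x s t : ℝ}

theorem hopfLax_eq_sInf_Icc (a b : ℝ) {τ : ℝ} (hτ : 0 < τ) :
    sInf ((fun y => τ * L ((x - y) / τ) + g y) '' Icc (x - b * τ) (x - a * τ)) =
      sInf ((fun z => τ * L z + g (x - τ * z)) '' Icc a b) := by
  rw [Icc_sub_mul_eq_image hτ, image_image]
  simp only [sub_sub_cancel, mul_div_cancel_left₀ _ hτ.ne']

theorem hopfLax_le_add_of_convexOn {S : Set ℝ} (hL : ConvexOn ℝ S L) (h0 : 0 ∈ S)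
    (hbdd : BddBelow ((fun z => t * L z + g (x - t * z)) '' S)) (hs : 0 < s) (hst : s ≤ t) :
    sInf ((fun z => t * L z + g (x - t * z)) '' S) ≤
      sInf ((fun z => s * L z + g (x - s * z)) '' S) + (t - s) * L 0 := by
  have ht : 0 < t := hs.trans_le hst
  have hθ₀ : 0 ≤ s / t := div_nonneg hs.le ht.le
  have hθ₁ : s / t ≤ 1 := div_le_one_of_le₀ hst ht.le
  refine csInf_image_le_csInf_image_add ⟨0, h0⟩ hbdd _ fun z hz => ⟨s / t * z, ?_, ?_⟩
  · simpa using hL.1.smul_mem_of_zero_mem h0 hz ⟨hθ₀, hθ₁⟩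
  · have hconv := hL.map_mul_le_of_zero_mem h0 hz hθ₀ hθ₁
    have hx : x - t * (s / t * z) = x - s * z := by field_simp
    calc t * L (s / t * z) + g (x - t * (s / t * z))
        ≤ t * (s / t * L z + (1 - s / t) * L 0) + g (x - s * z) := by
          rw [hx]; gcongr
      _ = s * L z + g (x - s * z) + (t - s) * L 0 := by field_simp; ring

theorem hopfLax_le_add_of_lipschitz {S : Set ℝ} (hS : S.Nonempty) {K M : ℝ}
    (hg : ∀ x y, |g x - g y| ≤ K * |x - y|) (hM : ∀ z ∈ S, K * |z| - L z ≤ M)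
    (hbdd : BddBelow ((fun z => s * L z + g (x - s * z)) '' S)) (hst : s ≤ t) :
    sInf ((fun z => s * L z + g (x - s * z)) '' S) ≤
      sInf ((fun z => t * L z + g (x - t * z)) '' S) + (t - s) * M := by
  refine csInf_image_le_csInf_image_add hS hbdd _ fun z hz => ⟨z, hz, ?_⟩
  have hgz : g (x - s * z) - g (x - t * z) ≤ (t - s) * (K * |z|) := by
    have habs : |x - s * z - (x - t * z)| = (t - s) * |z| := by
      rw [show x - s * z - (x - t * z) = (t - s) * z by ring, abs_mul,
        abs_of_nonneg (sub_nonneg.2 hst)]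
    calc g (x - s * z) - g (x - t * z) ≤ K * |x - s * z - (x - t * z)| :=
          (le_abs_self _).trans (hg _ _)
      _ = (t - s) * (K * |z|) := by rw [habs]; ring
  have hMz : (t - s) * (K * |z| - L z) ≤ (t - s) * M :=
    mul_le_mul_of_nonneg_left (hM z hz) (sub_nonneg.2 hst)
  linarith

end HopfLax

theorem stmt6_general (a b : ℝ) (ha : a < 0) (hb : 0 < b) (L : ℝ → ℝ)
    (hLconv : ConvexOn ℝ (Set.Icc a b) L) (hLcont : ContinuousOn L (Set.Icc a b))
    (K : ℝ) (g : ℝ → ℝ) (hg : ∀ x y : ℝ, |g x - g y| ≤ K * |x - y|) :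
    let u : ℝ → ℝ → ℝ := fun x t =>
      sInf ((fun y => t * L ((x - y) / t) + g y) '' Set.Icc (x - b * t) (x - a * t))
    let C : ℝ := max |L 0| (sSup ((fun z => K * |z| - L z) '' Set.Icc a b))
    ∀ x : ℝ, ∀ s t : ℝ, 0 < s → s < t → |u x t - u x s| ≤ C * (t - s) := by
  intro u C x s t hs hst
  have h0 : (0 : ℝ) ∈ Icc a b := ⟨ha.le, hb.le⟩
  have hgc : Continuous g :=
    (LipschitzWith.of_dist_le' fun y y' => by simpa only [Real.dist_eq] using hg y y').continuous
  have hbdd : ∀ τ, BddBelow ((fun z => τ * L z + g (x - τ * z)) '' Icc a b) := fun τ =>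
    isCompact_Icc.bddBelow_image <| (continuousOn_const.mul hLcont).add <|
      (hgc.comp (continuous_const.sub (continuous_const.mul continuous_id))).continuousOn
  have hM : ∀ z ∈ Icc a b, K * |z| - L z ≤ sSup ((fun z => K * |z| - L z) '' Icc a b) :=
    fun z hz => le_csSup (isCompact_Icc.bddAbove_image
      ((continuous_const.mul continuous_abs).continuousOn.sub hLcont)) ⟨z, hz, rfl⟩
  show |sInf _ - sInf _| ≤ C * (t - s)
  rw [hopfLax_eq_sInf_Icc a b (hs.trans hst), hopfLax_eq_sInf_Icc a b hs, abs_sub_le_iff,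
    sub_le_iff_le_add', sub_le_iff_le_add', mul_comm C]
  constructor
  · refine (hopfLax_le_add_of_convexOn hLconv h0 (hbdd t) hs hst.le).trans ?_
    gcongr
    exact (le_abs_self _).trans (le_max_left _ _)
  · refine (hopfLax_le_add_of_lipschitz ⟨0, h0⟩ hg hM (hbdd s) hst.le).trans ?_
    gcongr
    exact le_max_right _ _

/-- Lemma 3.5(a) (Lemma C, part (a)): Lipschitz continuity in time of the
Hopf–Lax function: `|u(x,t) - u(x,s)| ≤ C (t - s)` for `0 < s < t`. -/
theorem stmt6 (a b : ℝ) (ha : a < 0) (hb : 0 < b) (L : ℝ → ℝ)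
    (hLconv : ConvexOn ℝ (Set.Icc a b) L) (hLcont : ContinuousOn L (Set.Icc a b))
    (K : ℝ) (hK : 0 ≤ K) (g : ℝ → ℝ) (hg : ∀ x y : ℝ, |g x - g y| ≤ K * |x - y|) :
    let u : ℝ → ℝ → ℝ := fun x t =>
      sInf ((fun y => t * L ((x - y) / t) + g y) '' Set.Icc (x - b * t) (x - a * t))
    let C : ℝ := max |L 0| (sSup ((fun z => K * |z| - L z) '' Set.Icc a b))
    ∀ x : ℝ, ∀ s t : ℝ, 0 < s → s < t → |u x t - u x s| ≤ C * (t - s) :=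
  stmt6_general a b ha hb L hLconv hLcont K g hg
end

section
/- Fix real numbers a ≤ b, let L : ℝ → ℝ be convex on the closed interval [a,b], let g : ℝ → ℝ be any function, and let t > 0. Let x₁ < x₂ and y < y₁* be real numbers such that (x₁ − y₁*)/t ∈ [a,b] and (x₂ − y)/t ∈ [a,b]. If t·L((x₁ − y₁*)/t) + g(y₁*) ≤ t·L((x₁ − y)/t) + g(y), then t·L((x₂ − y₁*)/t) + g(y₁*) ≤ t·L((x₂ − y)/t) + g(y). -/
/-! With `p = (x₁ - y₁)/t`, `q = (x₂ - y)/t`, `u = (x₂ - y₁)/t`, `v = (x₁ - y)/t` we have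
`p ≤ u ≤ q` and `u + v = p + q`, so `u` and `v` are mirror-image convex combinations of `p` and `q`
and convexity gives `L u + L v ≤ L p + L q`. Adding `t` times this to the hypothesis at `x₁`
yields the claim at `x₂`. -/

open Set

theorem ConvexOn.apply_add_apply_le_of_add_eq {s : Set ℝ} {f : ℝ → ℝ} (hf : ConvexOn ℝ s f)
    {p q u v : ℝ} (hp : p ∈ s) (hq : q ∈ s) (hu : u ∈ Icc p q) (huv : u + v = p + q) :
    f u + f v ≤ f p + f q := by
  obtain rfl | hpq := hu.1.trans hu.2 |>.eq_or_lt
  · obtain rfl : u = p := le_antisymm hu.2 hu.1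
    obtain rfl : v = u := by linarith
    rfl
  have hqp : 0 < q - p := sub_pos.2 hpq
  set θ := (q - u) / (q - p)
  have hθ : θ ∈ Icc (0 : ℝ) 1 :=
    ⟨div_nonneg (by linarith [hu.2]) hqp.le, div_le_one_of_le₀ (by linarith [hu.1]) hqp.le⟩
  have hu_eq : θ • p + (1 - θ) • q = u := by
    simp only [smul_eq_mul, θ]; field_simp; ring
  have hv_eq : (1 - θ) • p + θ • q = v := by
    simp only [smul_eq_mul, θ]; field_simp; linear_combination (p - q) * huv
  have hfu := hu_eq ▸ hf.2 hp hq hθ.1 (sub_nonneg.2 hθ.2) (add_sub_cancel θ 1)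
  have hfv := hv_eq ▸ hf.2 hp hq (sub_nonneg.2 hθ.2) hθ.1 (sub_add_cancel 1 θ)
  simp only [smul_eq_mul] at hfu hfv
  linarith

theorem stmt12_general (a b : ℝ) (L : ℝ → ℝ)
    (hL : ConvexOn ℝ (Set.Icc a b) L) (g : ℝ → ℝ) (t : ℝ) (ht : 0 < t)
    (x₁ x₂ y y₁ : ℝ) (hx : x₁ < x₂) (hy : y < y₁)
    (h1 : (x₁ - y₁) / t ∈ Set.Icc a b) (h2 : (x₂ - y) / t ∈ Set.Icc a b)
    (hmin : t * L ((x₁ - y₁) / t) + g y₁ ≤ t * L ((x₁ - y) / t) + g y) :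
    t * L ((x₂ - y₁) / t) + g y₁ ≤ t * L ((x₂ - y) / t) + g y := by
  have hmid : (x₂ - y₁) / t ∈ Icc ((x₁ - y₁) / t) ((x₂ - y) / t) := ⟨by gcongr, by gcongr⟩
  have hsum : (x₂ - y₁) / t + (x₁ - y) / t = (x₁ - y₁) / t + (x₂ - y) / t := by ring
  have hconv := hL.apply_add_apply_le_of_add_eq h1 h2 hmid hsum
  linarith [mul_le_mul_of_nonneg_left hconv ht.le]

/-- Lemma 4.1: comparison inequality from convexity of `L` on `[a,b]`: if `y₁*`
beats a smaller point `y` in the Hopf–Lax minimization at `x₁`, it also beats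
`y` at any `x₂ > x₁`. -/
theorem stmt12 (a b : ℝ) (hab : a ≤ b) (L : ℝ → ℝ)
    (hL : ConvexOn ℝ (Set.Icc a b) L) (g : ℝ → ℝ) (t : ℝ) (ht : 0 < t)
    (x₁ x₂ y y₁ : ℝ) (hx : x₁ < x₂) (hy : y < y₁)
    (h1 : (x₁ - y₁) / t ∈ Set.Icc a b) (h2 : (x₂ - y) / t ∈ Set.Icc a b)
    (hmin : t * L ((x₁ - y₁) / t) + g y₁ ≤ t * L ((x₁ - y) / t) + g y) :
    t * L ((x₂ - y₁) / t) + g y₁ ≤ t * L ((x₂ - y) / t) + g y :=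
  stmt12_general a b L hL g t ht x₁ x₂ y y₁ hx hy h1 h2 hmin
end

section
/- Fix real numbers a < 0 < b, let L : ℝ → ℝ be convex and continuous on the closed interval [a,b], and let g : ℝ → ℝ be continuous. For x ∈ ℝ and t > 0 let y*(x,t) denote the greatest minimizer of y ↦ t·L((x−y)/t) + g(y) over the compact interval [x − b·t, x − a·t] (it exists: the set of minimizers is nonempty and contains its supremum). Then: (i) for each fixed t > 0, the map x ↦ y*(x,t) is nondecreasing on ℝ; and (ii) consequently, for each fixed t > 0, the map x ↦ y*(x,t) is differentiable at Lebesgue-almost every x ∈ ℝ. -/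
/-!
Write `c_t(x, y) = t L((x - y)/t) + g(y)` for the Hopf–Lax cost. Convexity of `L` makes `c_t`
submodular: for `x₁ ≤ x₂` and `y₂ < y₁` the four arguments of `L` satisfy
`(x₁ - y₁)/t ≤ (x₂ - y₁)/t, (x₁ - y₂)/t ≤ (x₂ - y₂)/t` with equal sums, so
`c_t(x₂, y₁) + c_t(x₁, y₂) ≤ c_t(x₁, y₁) + c_t(x₂, y₂)`. If the greatest minimizers satisfied
`y*(x₂) < y*(x₁)`, then, since `y*(x₁)` beats `y*(x₂)` at `x₁`, submodularity would make `y*(x₁)`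
a minimizer at `x₂` larger than `y*(x₂)`, which is impossible (Topkis' argument). Monotone
functions are differentiable almost everywhere (Lebesgue).
-/

open MeasureTheory Set

theorem ConvexOn.map_add_map_le_of_add_eq {𝕜 : Type*} [Field 𝕜] [LinearOrder 𝕜]
    [IsStrictOrderedRing 𝕜] {s : Set 𝕜} {f : 𝕜 → 𝕜} (hf : ConvexOn 𝕜 s f) {x y w z : 𝕜}
    (hx : x ∈ s) (hz : z ∈ s) (hxy : x ≤ y) (hxw : x ≤ w) (hsum : y + w = x + z) :
    f y + f w ≤ f x + f z := by
  rcases hxy.eq_or_lt with rfl | hxy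
  · rw [show w = z by linarith, add_comm]
  rcases hxw.eq_or_lt with rfl | hxw
  · rw [show y = z by linarith, add_comm]
  have hy := hf.secant_mono_aux1 hx hz hxy (by linarith : y < z)
  have hw := hf.secant_mono_aux1 hx hz hxw (by linarith : w < z)
  have hzx : 0 < z - x := by linarith
  refine le_of_mul_le_mul_left ?_ hzx
  linear_combination hy + hw + (f z - f x) * hsum

theorem monotone_of_isGreatest_argmin {α β γ : Type*} [Preorder α] [LinearOrder β]
    [AddCommMonoid γ] [PartialOrder γ] [IsOrderedCancelAddMonoid γ]
    {F : α → β → γ} {S : α → Set β} {y : α → β}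
    (hS : ∀ ⦃x₁ x₂ u v⦄, x₁ ≤ x₂ → u ∈ S x₁ → v ∈ S x₂ → v < u → v ∈ S x₁ ∧ u ∈ S x₂)
    (hF : ∀ ⦃x₁ x₂ u v⦄, x₁ ≤ x₂ → u ∈ S x₁ → v ∈ S x₂ → v < u →
      F x₁ v + F x₂ u ≤ F x₁ u + F x₂ v)
    (hy : ∀ x, IsGreatest {u ∈ S x | ∀ z ∈ S x, F x u ≤ F x z} (y x)) :
    Monotone y := by
  intro x₁ x₂ hx
  by_contra! hlt
  obtain ⟨⟨hy₁, hmin₁⟩, -⟩ := hy x₁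
  obtain ⟨⟨hy₂, hmin₂⟩, hgreatest₂⟩ := hy x₂
  obtain ⟨hy₂₁, hy₁₂⟩ := hS hx hy₁ hy₂ hlt
  have hsub := hF hx hy₁ hy₂ hlt
  have hbetter : F x₂ (y x₁) ≤ F x₂ (y x₂) :=
    le_of_add_le_add_left (hsub.trans (add_le_add (hmin₁ _ hy₂₁) le_rfl))
  have hargmin : y x₁ ∈ {u ∈ S x₂ | ∀ z ∈ S x₂, F x₂ u ≤ F x₂ z} :=
    ⟨hy₁₂, fun z hz => hbetter.trans (hmin₂ z hz)⟩
  exact (hgreatest₂ hargmin).not_gt hlt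

theorem Icc_exchange {α β : Type*} [Preorder α] [LinearOrder β] {l r : α → β}
    (hl : Monotone l) (hr : Monotone r) ⦃x₁ x₂ : α⦄ ⦃u v : β⦄ (hx : x₁ ≤ x₂)
    (hu : u ∈ Icc (l x₁) (r x₁)) (hv : v ∈ Icc (l x₂) (r x₂)) (hvu : v < u) :
    v ∈ Icc (l x₁) (r x₁) ∧ u ∈ Icc (l x₂) (r x₂) :=
  ⟨⟨(hl hx).trans hv.1, hvu.le.trans hu.2⟩, ⟨hv.1.trans hvu.le, hu.2.trans (hr hx)⟩⟩

noncomputable def hopfLaxCost (L g : ℝ → ℝ) (t x y : ℝ) : ℝ := t * L ((x - y) / t) + g y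

theorem hopfLaxCost_submodular {s : Set ℝ} {L : ℝ → ℝ} (hL : ConvexOn ℝ s L) (g : ℝ → ℝ)
    {t x₁ x₂ y₁ y₂ : ℝ} (ht : 0 < t) (hx : x₁ ≤ x₂) (hy : y₂ ≤ y₁)
    (h₁ : (x₁ - y₁) / t ∈ s) (h₂ : (x₂ - y₂) / t ∈ s) :
    hopfLaxCost L g t x₁ y₂ + hopfLaxCost L g t x₂ y₁ ≤
      hopfLaxCost L g t x₁ y₁ + hopfLaxCost L g t x₂ y₂ := by
  have hconv := hL.map_add_map_le_of_add_eq (y := (x₂ - y₁) / t) (w := (x₁ - y₂) / t) h₁ h₂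
    (by gcongr) (by gcongr) (by ring)
  unfold hopfLaxCost
  linarith [mul_le_mul_of_nonneg_left hconv ht.le]

theorem sub_div_mem_Icc_iff {a b t x y : ℝ} (ht : 0 < t) :
    (x - y) / t ∈ Icc a b ↔ y ∈ Icc (x - b * t) (x - a * t) := by
  rw [mem_Icc, mem_Icc, le_div_iff₀ ht, div_le_iff₀ ht]
  constructor <;> rintro ⟨h₁, h₂⟩ <;> constructor <;> linarith

theorem stmt13_general (a b : ℝ) (L : ℝ → ℝ)
    (hLconv : ConvexOn ℝ (Set.Icc a b) L)
    (g : ℝ → ℝ) (ystar : ℝ → ℝ → ℝ)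
    (hmem : ∀ x : ℝ, ∀ t > (0 : ℝ),
      ystar x t ∈ Set.Icc (x - b * t) (x - a * t))
    (hmin : ∀ x : ℝ, ∀ t > (0 : ℝ), ∀ z ∈ Set.Icc (x - b * t) (x - a * t),
      t * L ((x - ystar x t) / t) + g (ystar x t) ≤ t * L ((x - z) / t) + g z)
    (hgreatest : ∀ x : ℝ, ∀ t > (0 : ℝ), ∀ y ∈ Set.Icc (x - b * t) (x - a * t),
      (∀ z ∈ Set.Icc (x - b * t) (x - a * t),
        t * L ((x - y) / t) + g y ≤ t * L ((x - z) / t) + g z) → y ≤ ystar x t) :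
    (∀ t > (0 : ℝ), Monotone fun x => ystar x t) ∧
    (∀ t > (0 : ℝ), ∀ᵐ x : ℝ ∂volume, DifferentiableAt ℝ (fun x' => ystar x' t) x) := by
  have hmono : ∀ t > (0 : ℝ), Monotone fun x => ystar x t := by
    intro t ht
    have hl : Monotone fun x : ℝ => x - b * t := fun _ _ h => sub_le_sub_right h _
    have hr : Monotone fun x : ℝ => x - a * t := fun _ _ h => sub_le_sub_right h _
    refine monotone_of_isGreatest_argmin (F := hopfLaxCost L g t)
      (S := fun x => Icc (x - b * t) (x - a * t)) (Icc_exchange hl hr)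
      (fun _ _ _ _ hx hu hv hvu => hopfLaxCost_submodular hLconv g ht hx hvu.le
        ((sub_div_mem_Icc_iff ht).2 hu) ((sub_div_mem_Icc_iff ht).2 hv))
      fun x => ⟨⟨hmem x t ht, hmin x t ht⟩, fun y hy => hgreatest x t ht y hy.1 hy.2⟩
  exact ⟨hmono, fun t ht => (hmono t ht).ae_differentiableAt⟩

/-- Theorem 4.2: the greatest minimizer `y*(x,t)` of the Hopf–Lax functional is
nondecreasing in `x` for each fixed `t > 0`, and hence differentiable at
almost every `x`. -/
theorem stmt13 (a b : ℝ) (ha : a < 0) (hb : 0 < b) (L : ℝ → ℝ)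
    (hLconv : ConvexOn ℝ (Set.Icc a b) L) (hLcont : ContinuousOn L (Set.Icc a b))
    (g : ℝ → ℝ) (hg : Continuous g) (ystar : ℝ → ℝ → ℝ)
    (hmem : ∀ x : ℝ, ∀ t > (0 : ℝ),
      ystar x t ∈ Set.Icc (x - b * t) (x - a * t))
    (hmin : ∀ x : ℝ, ∀ t > (0 : ℝ), ∀ z ∈ Set.Icc (x - b * t) (x - a * t),
      t * L ((x - ystar x t) / t) + g (ystar x t) ≤ t * L ((x - z) / t) + g z)
    (hgreatest : ∀ x : ℝ, ∀ t > (0 : ℝ), ∀ y ∈ Set.Icc (x - b * t) (x - a * t),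
      (∀ z ∈ Set.Icc (x - b * t) (x - a * t),
        t * L ((x - y) / t) + g y ≤ t * L ((x - z) / t) + g z) → y ≤ ystar x t) :
    (∀ t > (0 : ℝ), Monotone fun x => ystar x t) ∧
    (∀ t > (0 : ℝ), ∀ᵐ x : ℝ ∂volume, DifferentiableAt ℝ (fun x' => ystar x' t) x) :=
  stmt13_general a b L hLconv g ystar hmem hmin hgreatest
end

section
/- Fix real numbers a < 0 < b, let L : ℝ → ℝ be convex and continuous on the closed interval [a,b] and piecewise linear there (there is a partition a = p₀ < p₁ < ⋯ < p_M = b such that L is affine on each subinterval [p_{j−1}, p_j]), and let g : ℝ → ℝ be continuously differentiable. For x ∈ ℝ and t > 0 define u(x,t) := min_{y ∈ [x − b·t, x − a·t]} ( t·L((x−y)/t) + g(y) ), and let y*(x,t) denote the greatest minimizer of y ↦ t·L((x−y)/t) + g(y) over [x − b·t, x − a·t]. Then for each fixed t > 0, for Lebesgue-almost every x ∈ ℝ, the function x' ↦ u(x',t) is differentiable at x and ∂_x u(x,t) = g'( y*(x,t) ). -/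
/-!
The cost `t L((x - y)/t)` depends only on `x - y` and is convex, hence submodular; this forces the
greatest minimizer `y*(·, t)` to be nondecreasing, so it is continuous off a countable set.
Translating the minimizer at one point by `h = x' - x` gives a competitor at the other, whence
`g(y*(x')) - g(y*(x') - h) ≤ u(x') - u(x) ≤ g(y*(x) + h) - g(y*(x))`.
Where `y*` is continuous, strict differentiability of `g` at `y*(x)` makes both bounds
`g'(y*(x)) h + o(h)`.
-/

open MeasureTheory Set Filter Topology Asymptotics

theorem ConvexOn.apply_add_apply_le_of_add_eq_s15 {s : Set ℝ} {f : ℝ → ℝ} (hf : ConvexOn ℝ s f)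
    {w x y z : ℝ} (hw : w ∈ s) (hz : z ∈ s) (hwx : w ≤ x) (hxz : x ≤ z)
    (hsum : x + y = w + z) : f x + f y ≤ f w + f z := by
  obtain rfl | hwz := (hwx.trans hxz).eq_or_lt
  · obtain rfl : x = w := le_antisymm hxz hwx
    obtain rfl : y = x := by linarith
    rfl
  set μ := (z - x) / (z - w)
  have hμ₀ : 0 ≤ μ := div_nonneg (by linarith) (by linarith)
  have hμ₁ : 0 ≤ 1 - μ := by rw [sub_nonneg, div_le_one (by linarith)]; linarith
  have hx : μ • w + (1 - μ) • z = x := by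
    simp only [smul_eq_mul, μ]; field_simp; ring
  have hy : (1 - μ) • w + μ • z = y := by
    simp only [smul_eq_mul, μ]; field_simp; linear_combination hsum * (w - z)
  have h₁ := hf.2 hw hz hμ₀ hμ₁ (by ring)
  have h₂ := hf.2 hw hz hμ₁ hμ₀ (by ring)
  rw [hx] at h₁
  rw [hy] at h₂
  simp only [smul_eq_mul] at h₁ h₂
  linarith

theorem ConvexOn.const_mul_comp_div {a b t : ℝ} {L : ℝ → ℝ} (hL : ConvexOn ℝ (Icc a b) L)
    (ht : 0 < t) : ConvexOn ℝ (Icc (a * t) (b * t)) fun z => t * L (z / t) := by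
  have hdiv : ∀ z ∈ Icc (a * t) (b * t), z / t ∈ Icc a b := fun z hz =>
    ⟨(le_div_iff₀ ht).2 hz.1, (div_le_iff₀ ht).2 hz.2⟩
  refine ⟨convex_Icc _ _, fun x hx y hy μ ν hμ hν hμν => ?_⟩
  have h := mul_le_mul_of_nonneg_left (hL.2 (hdiv x hx) (hdiv y hy) hμ hν hμν) ht.le
  simp only [smul_eq_mul] at h ⊢
  rw [show (μ * x + ν * y) / t = μ * (x / t) + ν * (y / t) by ring]
  linarith

theorem Asymptotics.IsLittleO.of_le_of_le {α E : Type*} [Norm E] {l : Filter α}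
    {f lo hi : α → ℝ} {g : α → E} (hlo : lo =o[l] g) (hhi : hi =o[l] g)
    (h₁ : ∀ x, lo x ≤ f x) (h₂ : ∀ x, f x ≤ hi x) : f =o[l] g := by
  refine (isBigO_of_le _ fun x => ?_).trans_isLittleO (hlo.norm_left.add hhi.norm_left)
  simp only [Real.norm_eq_abs]
  rw [abs_of_nonneg (add_nonneg (abs_nonneg (lo x)) (abs_nonneg (hi x)))]
  exact (abs_le_max_abs_abs (h₁ x) (h₂ x)).trans
    (max_le_add_of_nonneg (abs_nonneg _) (abs_nonneg _))

theorem HasStrictDerivAt.hasDerivAt_of_sub_le_of_le_sub {g v φ : ℝ → ℝ} {d x : ℝ}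
    (hg : HasStrictDerivAt g d (φ x)) (hφ : ContinuousAt φ x)
    (hupper : ∀ x', v x' - v x ≤ g (φ x + (x' - x)) - g (φ x))
    (hlower : ∀ x', v x - v x' ≤ g (φ x' + (x - x')) - g (φ x')) :
    HasDerivAt v d x := by
  have ho := hasDerivAtFilter_iff_isLittleO.mp hg
  have hupper_o : (fun x' => g (φ x + (x' - x)) - g (φ x) - (x' - x) * d) =o[𝓝 x]
      fun x' => x' - x := by
    have hlim : Tendsto (fun x' => (φ x + (x' - x), φ x)) (𝓝 x) (𝓝 (φ x, φ x)) := by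
      have : Continuous fun x' => (φ x + (x' - x), φ x) := by fun_prop
      simpa using this.tendsto x
    simpa [Function.comp_def] using ho.comp_tendsto hlim
  have hlower_o : (fun x' => g (φ x') - g (φ x' + (x - x')) - (x' - x) * d) =o[𝓝 x]
      fun x' => x' - x := by
    have hlim : Tendsto (fun x' => (φ x', φ x' + (x - x'))) (𝓝 x) (𝓝 (φ x, φ x)) := by
      have : ContinuousAt (fun x' => (φ x', φ x' + (x - x'))) x := by fun_prop
      simpa using this.tendsto
    simpa [Function.comp_def] using ho.comp_tendsto hlim
  rw [hasDerivAt_iff_isLittleO]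
  simp only [smul_eq_mul]
  exact hlower_o.of_le_of_le hupper_o (fun x' => by linarith [hlower x'])
    fun x' => by linarith [hupper x']

section HopfLax

variable {K g : ℝ → ℝ} {α β : ℝ}

theorem IsMinOn.hopfLax_le_translate {x x' y y' : ℝ} (hy : y ∈ Icc (x - β) (x - α))
    (hy' : IsMinOn (fun z => K (x' - z) + g z) (Icc (x' - β) (x' - α)) y') :
    K (x' - y') + g y' ≤ K (x - y) + g (y + (x' - x)) := by
  have hmem : y + (x' - x) ∈ Icc (x' - β) (x' - α) := ⟨by linarith [hy.1], by linarith [hy.2]⟩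
  have h := isMinOn_iff.mp hy' _ hmem
  rwa [show x' - (y + (x' - x)) = x - y by ring] at h

theorem ConvexOn.monotone_of_isGreatest_minimizer {φ : ℝ → ℝ} (hK : ConvexOn ℝ (Icc α β) K)
    (hmem : ∀ x, φ x ∈ Icc (x - β) (x - α))
    (hmin : ∀ x, IsMinOn (fun y => K (x - y) + g y) (Icc (x - β) (x - α)) (φ x))
    (hgreatest : ∀ x, ∀ y ∈ Icc (x - β) (x - α),
      IsMinOn (fun y => K (x - y) + g y) (Icc (x - β) (x - α)) y → y ≤ φ x) :
    Monotone φ := by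
  intro x₁ x₂ hx
  by_contra! hlt
  have h₁ : φ x₂ ∈ Icc (x₁ - β) (x₁ - α) :=
    ⟨by linarith [(hmem x₂).1], by linarith [(hmem x₁).2]⟩
  have h₂ : φ x₁ ∈ Icc (x₂ - β) (x₂ - α) :=
    ⟨by linarith [(hmem x₂).1], by linarith [(hmem x₁).2]⟩
  have hsub : K (x₂ - φ x₁) + K (x₁ - φ x₂) ≤ K (x₁ - φ x₁) + K (x₂ - φ x₂) :=
    hK.apply_add_apply_le_of_add_eq_s15 (sub_mem_Icc_iff_right.2 (hmem x₁))
      (sub_mem_Icc_iff_right.2 (hmem x₂)) (by linarith) (by linarith) (by ring)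
  have hmin₁ := isMinOn_iff.mp (hmin x₁) _ h₁
  have hmin₂ : IsMinOn (fun y => K (x₂ - y) + g y) (Icc (x₂ - β) (x₂ - α)) (φ x₁) :=
    isMinOn_iff.mpr fun z hz => by linarith [isMinOn_iff.mp (hmin x₂) z hz]
  exact hlt.not_ge (hgreatest x₂ _ h₂ hmin₂)

end HopfLax

theorem stmt15_general (a b : ℝ) (L : ℝ → ℝ)
    (hLconv : ConvexOn ℝ (Set.Icc a b) L)
    (g : ℝ → ℝ) (hg : ContDiff ℝ 1 g) (ystar : ℝ → ℝ → ℝ)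
    (hmem : ∀ x : ℝ, ∀ t > (0 : ℝ),
      ystar x t ∈ Set.Icc (x - b * t) (x - a * t))
    (hmin : ∀ x : ℝ, ∀ t > (0 : ℝ), ∀ z ∈ Set.Icc (x - b * t) (x - a * t),
      t * L ((x - ystar x t) / t) + g (ystar x t) ≤ t * L ((x - z) / t) + g z)
    (hgreatest : ∀ x : ℝ, ∀ t > (0 : ℝ), ∀ y ∈ Set.Icc (x - b * t) (x - a * t),
      (∀ z ∈ Set.Icc (x - b * t) (x - a * t),
        t * L ((x - y) / t) + g y ≤ t * L ((x - z) / t) + g z) → y ≤ ystar x t) :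
    let u : ℝ → ℝ → ℝ := fun x t =>
      sInf ((fun y => t * L ((x - y) / t) + g y) '' Set.Icc (x - b * t) (x - a * t))
    ∀ t > (0 : ℝ), ∀ᵐ x : ℝ ∂volume,
      DifferentiableAt ℝ (fun x' => u x' t) x ∧
      deriv (fun x' => u x' t) x = deriv g (ystar x t) := by
  intro u t ht
  have hK := hLconv.const_mul_comp_div ht
  have hu : ∀ x, u x t = t * L ((x - ystar x t) / t) + g (ystar x t) := fun x =>
    IsLeast.csInf_eq ⟨mem_image_of_mem _ (hmem x t ht), forall_mem_image.2 (hmin x t ht)⟩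
  have hmono : Monotone (ystar · t) :=
    hK.monotone_of_isGreatest_minimizer (hmem · t ht) (fun x => isMinOn_iff.mpr (hmin x t ht))
      fun x y hy hy' => hgreatest x t ht y hy (isMinOn_iff.mp hy')
  have hcont : ∀ᵐ x ∂volume, ContinuousAt (ystar · t) x :=
    hmono.countable_not_continuousAt.measure_zero volume
  have hshift : ∀ x x', u x' t - u x t ≤ g (ystar x t + (x' - x)) - g (ystar x t) :=
    fun x x' => by
      have := (isMinOn_iff.mpr (hmin x' t ht)).hopfLax_le_translate
        (K := fun z => t * L (z / t)) (hmem x t ht)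
      rw [hu, hu]
      linarith
  filter_upwards [hcont] with x hx
  have hder : HasDerivAt (fun x' => u x' t) (deriv g (ystar x t)) x :=
    (hg.contDiffAt.hasStrictDerivAt one_ne_zero).hasDerivAt_of_sub_le_of_le_sub hx
      (hshift x) fun x' => hshift x' x
  exact ⟨hder.differentiableAt, hder.deriv⟩

/-- Theorem 4.3 (main identity): for the conservation law with polygonal flux
(piecewise linear convex `L` on `[a,b]`) and `g ∈ C¹`, for each fixed `t > 0`
and a.e. `x`, the Hopf–Lax value function is differentiable in `x` and
`∂ₓ u(x,t) = g'(y*(x,t))`, where `y*` is the greatest minimizer. -/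
theorem stmt15 (a b : ℝ) (ha : a < 0) (hb : 0 < b) (L : ℝ → ℝ)
    (hLconv : ConvexOn ℝ (Set.Icc a b) L) (hLcont : ContinuousOn L (Set.Icc a b))
    (M : ℕ) (p : Fin (M + 1) → ℝ) (hp : StrictMono p)
    (hp0 : p 0 = a) (hpM : p (Fin.last M) = b)
    (hpiecewise : ∀ j : Fin M, ∃ c d : ℝ,
      ∀ q ∈ Set.Icc (p j.castSucc) (p j.succ), L q = c * q + d)
    (g : ℝ → ℝ) (hg : ContDiff ℝ 1 g) (ystar : ℝ → ℝ → ℝ)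
    (hmem : ∀ x : ℝ, ∀ t > (0 : ℝ),
      ystar x t ∈ Set.Icc (x - b * t) (x - a * t))
    (hmin : ∀ x : ℝ, ∀ t > (0 : ℝ), ∀ z ∈ Set.Icc (x - b * t) (x - a * t),
      t * L ((x - ystar x t) / t) + g (ystar x t) ≤ t * L ((x - z) / t) + g z)
    (hgreatest : ∀ x : ℝ, ∀ t > (0 : ℝ), ∀ y ∈ Set.Icc (x - b * t) (x - a * t),
      (∀ z ∈ Set.Icc (x - b * t) (x - a * t),
        t * L ((x - y) / t) + g y ≤ t * L ((x - z) / t) + g z) → y ≤ ystar x t) :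
    let u : ℝ → ℝ → ℝ := fun x t =>
      sInf ((fun y => t * L ((x - y) / t) + g y) '' Set.Icc (x - b * t) (x - a * t))
    ∀ t > (0 : ℝ), ∀ᵐ x : ℝ ∂volume,
      DifferentiableAt ℝ (fun x' => u x' t) x ∧
      deriv (fun x' => u x' t) x = deriv g (ystar x t) :=
  stmt15_general a b L hLconv g hg ystar hmem hmin hgreatest
end

section
/- Let α < β < γ and y_m be real numbers, and let G : ℝ → ℝ satisfy G(y) = G(y_m) + α·(y − y_m) for all y ≤ y_m and G(y) = G(y_m) + γ·(y − y_m) for all y ≥ y_m; let g : ℝ → ℝ be g(y) := β·y. Then: (i) y_m is the unique minimizer of G − g over ℝ. Moreover, let A ⊆ ℝ be a compact set with y_m ∈ A, let ε > 0 and C₁ > 0, and let G_ε : ℝ → ℝ satisfy |G_ε(y) − G(y)| ≤ C₁·ε for all y ∈ A. Then (ii) every minimizer y_m^ε of G_ε − g over A satisfies |y_m^ε − y_m| ≤ ( 2·C₁ / min(β − α, γ − β) )·ε. -/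
/-! The v-shape gives the sharp growth bound `min (β - α) (γ - β) * |y - y_m| ≤ (G - g) y - (G - g) y_m`,
so `y_m` is a strict minimizer. A minimizer of the perturbed function beats `y_m`, and each of the two
values moves by at most `C₁ ε` under the perturbation, so its excess over `y_m` for `G - g` is at most
`2 C₁ ε`; the growth bound turns this into the distance estimate. -/

lemma min_sub_mul_abs_sub_le_of_vShape {α β γ y₀ : ℝ} {G : ℝ → ℝ}
    (hleft : ∀ y ≤ y₀, G y = G y₀ + α * (y - y₀))
    (hright : ∀ y ≥ y₀, G y = G y₀ + γ * (y - y₀)) (y : ℝ) :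
    min (β - α) (γ - β) * |y - y₀| ≤ (G y - β * y) - (G y₀ - β * y₀) := by
  rcases le_total y y₀ with hy | hy
  · rw [hleft y hy, abs_of_nonpos (sub_nonpos.mpr hy)]
    have hmin : min (β - α) (γ - β) ≤ β - α := min_le_left _ _
    nlinarith
  · rw [hright y hy, abs_of_nonneg (sub_nonneg.mpr hy)]
    have hmin : min (β - α) (γ - β) ≤ γ - β := min_le_right _ _
    nlinarith

lemma lt_of_mul_abs_sub_le_sub {f : ℝ → ℝ} {m y₀ y : ℝ} (hm : 0 < m)
    (hf : m * |y - y₀| ≤ f y - f y₀) (hy : y ≠ y₀) : f y₀ < f y := by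
  have hdist : 0 < |y - y₀| := abs_pos.mpr (sub_ne_zero.mpr hy)
  nlinarith

lemma mul_abs_sub_le_two_mul_of_perturbation {f h : ℝ → ℝ} {m δ y₀ y : ℝ}
    (hf : m * |y - y₀| ≤ f y - f y₀) (hy₀ : |h y₀ - f y₀| ≤ δ) (hy : |h y - f y| ≤ δ)
    (hle : h y ≤ h y₀) : m * |y - y₀| ≤ 2 * δ := by
  rw [abs_le] at hy₀ hy
  linarith

/-- Lemma 5.1 (Smoothing): for a v-shaped piecewise linear `G` with slopes
`α < γ` and the linear function `g(y) = β y` with `α < β < γ`, the point `y_m`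
is the unique minimizer of `G - g`, and any minimizer over a compact set `A`
of an `ε`-uniform perturbation `G_ε - g` is within `(2 C₁ / min(β-α, γ-β)) ε`
of `y_m`. -/
theorem stmt17 (α β γ y_m : ℝ) (hαβ : α < β) (hβγ : β < γ) (G : ℝ → ℝ)
    (hGleft : ∀ y ≤ y_m, G y = G y_m + α * (y - y_m))
    (hGright : ∀ y ≥ y_m, G y = G y_m + γ * (y - y_m)) :
    (∀ y : ℝ, y ≠ y_m → G y_m - β * y_m < G y - β * y) ∧
    (∀ A : Set ℝ, IsCompact A → y_m ∈ A → ∀ ε > (0 : ℝ), ∀ C₁ > (0 : ℝ),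
      ∀ Gε : ℝ → ℝ, (∀ y ∈ A, |Gε y - G y| ≤ C₁ * ε) →
      ∀ y_mε ∈ A, (∀ y ∈ A, Gε y_mε - β * y_mε ≤ Gε y - β * y) →
        |y_mε - y_m| ≤ (2 * C₁ / min (β - α) (γ - β)) * ε) := by
  have hm : 0 < min (β - α) (γ - β) := lt_min (sub_pos.mpr hαβ) (sub_pos.mpr hβγ)
  have growth := min_sub_mul_abs_sub_le_of_vShape (β := β) hGleft hGright
  refine ⟨fun y hy => lt_of_mul_abs_sub_le_sub (f := fun y => G y - β * y) hm (growth y) hy, ?_⟩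
  intro A _ hy_mA ε _ C₁ _ Gε hGε y_mε hy_mεA hmin
  have perturbation : ∀ y ∈ A, |(Gε y - β * y) - (G y - β * y)| ≤ C₁ * ε := fun y hy => by
    rw [sub_sub_sub_cancel_right]
    exact hGε y hy
  have hbound := mul_abs_sub_le_two_mul_of_perturbation
    (f := fun y => G y - β * y) (h := fun y => Gε y - β * y) (growth y_mε)
    (perturbation y_m hy_mA) (perturbation y_mε hy_mεA) (hmin y_m hy_mA)
  rw [div_mul_eq_mul_div, le_div_iff₀ hm]
  linarith
end
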